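/- arXiv:1709.00031 — 3 statements merged into one kernel-verified Lean document; each statement's English description precedes it below -/
import Mathlib

section
/- If an amalgamation pattern H over I is coherent, then the equivalence relation ≈ on H (the smallest equivalence relation identifying a with ρ_e(a) for all links e and a ∈ dom(ρ_e)) is trivial in restriction to each site A_s: no two distinct elements of the same A_s are ≈-equivalent. -/
/-- An incidence pattern: a directed multigraph with involutive edge reversal
(Definition 2.4 of the paper). -/
structure IncidencePattern where
  S : Type
  E : Type
  src : E → S
  tgt : E → S
  einv : E → E
  einv_einv : ∀ e, einv (einv e) = e
  src_einv : ∀ e, src (einv e) = tgt e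

/-- `IsWalk I w s s'` : the list of links `w` is a walk from site `s` to site `s'` in `I`. -/
def IsWalk (I : IncidencePattern) : List I.E → I.S → I.S → Prop
  | [], s, s' => s = s'
  | e :: w, s, s' => I.src e = s ∧ IsWalk I w (I.tgt e) s'

/-- An amalgamation pattern over an incidence pattern `I` (Definition 2.6):
a σ-structure `H` partitioned into sites by `sort`, with a partial isomorphism
`pmap e : A_{src e} ⇀ A_{tgt e}` for every link `e`, inverses matching edge reversal. -/
structure AmalgPattern (σ : Type) (ar : σ → ℕ) (I : IncidencePattern) where
  H : Type
  sort : H → I.S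
  rel : ∀ R : σ, (Fin (ar R) → H) → Prop
  pmap : I.E → H → Option H
  pmap_sort : ∀ e a b, pmap e a = some b → sort a = I.src e ∧ sort b = I.tgt e
  pmap_einv : ∀ e a b, pmap e a = some b ↔ pmap (I.einv e) b = some a
  pmap_iso : ∀ (e : I.E) (R : σ) (t t' : Fin (ar R) → H),
      (∀ i, pmap e (t i) = some (t' i)) → (rel R t ↔ rel R t')

/-- The composition ρ_w of the linking partial isomorphisms along a walk `w`. -/
def walkMap {σ : Type} {ar : σ → ℕ} {I : IncidencePattern} (Hp : AmalgPattern σ ar I) :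
    List I.E → Hp.H → Option Hp.H
  | [] => fun a => some a
  | e :: w => fun a => (Hp.pmap e a).bind (walkMap Hp w)

/-- Coherence (Definition 2.7(i)): the compositions along any two walks between the
same pair of sites agree on their common domain. -/
def Coherent {σ : Type} {ar : σ → ℕ} {I : IncidencePattern} (Hp : AmalgPattern σ ar I) : Prop :=
  ∀ (s s' : I.S) (w₁ w₂ : List I.E), IsWalk I w₁ s s' → IsWalk I w₂ s s' →
    ∀ a b₁ b₂, Hp.sort a = s →
      walkMap Hp w₁ a = some b₁ → walkMap Hp w₂ a = some b₂ → b₁ = b₂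

/-- Strong coherence (Definition 2.7(iii)): any two compositions along walks between
the same pair of sites admit a common extension along some walk between those sites. -/
def StronglyCoherent {σ : Type} {ar : σ → ℕ} {I : IncidencePattern}
    (Hp : AmalgPattern σ ar I) : Prop :=
  ∀ (s s' : I.S) (w₁ w₂ : List I.E), IsWalk I w₁ s s' → IsWalk I w₂ s s' →
    ∃ w, IsWalk I w s s' ∧
      (∀ a b, Hp.sort a = s → walkMap Hp w₁ a = some b → walkMap Hp w a = some b) ∧
      (∀ a b, Hp.sort a = s → walkMap Hp w₂ a = some b → walkMap Hp w a = some b)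

/-- One identification step along a single link of the amalgamation pattern. -/
def AStep {σ : Type} {ar : σ → ℕ} {I : IncidencePattern} (Hp : AmalgPattern σ ar I)
    (a b : Hp.H) : Prop :=
  ∃ e, Hp.pmap e a = some b

/-- The equivalence relation ≈ induced by the links: the smallest equivalence relation
identifying `a` with `ρ_e(a)`. -/
def Approx {σ : Type} {ar : σ → ℕ} {I : IncidencePattern} (Hp : AmalgPattern σ ar I) :
    Hp.H → Hp.H → Prop :=
  Relation.EqvGen (AStep Hp)

lemma isWalk_append {I : IncidencePattern} :
    ∀ (w₁ w₂ : List I.E) (s s' s'' : I.S), IsWalk I w₁ s s' → IsWalk I w₂ s' s'' →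
      IsWalk I (w₁ ++ w₂) s s''
  | [], w₂, s, s', s'', h1, h2 => by cases h1; exact h2
  | e :: w, w₂, s, s', s'', h1, h2 =>
    ⟨h1.1, isWalk_append w w₂ _ s' s'' h1.2 h2⟩

lemma walkMap_append {σ : Type} {ar : σ → ℕ} {I : IncidencePattern} (Hp : AmalgPattern σ ar I) :
    ∀ (w₁ w₂ : List I.E) (a : Hp.H),
      walkMap Hp (w₁ ++ w₂) a = (walkMap Hp w₁ a).bind (walkMap Hp w₂)
  | [], w₂, a => rfl
  | e :: w, w₂, a => by
    simp only [List.cons_append, walkMap, Option.bind_assoc]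
    cases Hp.pmap e a with
    | none => rfl
    | some c => exact walkMap_append Hp w w₂ c

lemma isWalk_rev {I : IncidencePattern} :
    ∀ (w : List I.E) (s s' : I.S), IsWalk I w s s' →
      IsWalk I ((w.reverse).map I.einv) s' s
  | [], s, s', h => by cases h; exact rfl
  | e :: w, s, s', h => by
    simp only [List.reverse_cons, List.map_append, List.map_cons, List.map_nil]
    refine isWalk_append _ _ _ _ _ (isWalk_rev w _ s' h.2) ?_
    refine ⟨I.src_einv e ▸ rfl, ?_⟩
    show I.tgt (I.einv e) = s
    have := I.src_einv (I.einv e)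
    rw [I.einv_einv] at this
    rw [← this, h.1]

lemma walkMap_rev {σ : Type} {ar : σ → ℕ} {I : IncidencePattern} (Hp : AmalgPattern σ ar I) :
    ∀ (w : List I.E) (a b : Hp.H), walkMap Hp w a = some b →
      walkMap Hp ((w.reverse).map I.einv) b = some a
  | [], a, b, h => by cases h; rfl
  | e :: w, a, b, h => by
    simp only [walkMap] at h
    cases hc : Hp.pmap e a with
    | none => rw [hc] at h; simp at h
    | some c =>
      rw [hc] at h; simp only [Option.bind_some] at h
      simp only [List.reverse_cons, List.map_append, List.map_cons, List.map_nil,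
        walkMap_append Hp, walkMap_rev Hp w c b h, Option.bind_some]
      simp only [walkMap]
      rw [(Hp.pmap_einv e a c).mp hc]
      rfl

lemma approx_walk {σ : Type} {ar : σ → ℕ} {I : IncidencePattern} (Hp : AmalgPattern σ ar I)
    {a b : Hp.H} (h : Approx Hp a b) :
    ∃ w, IsWalk I w (Hp.sort a) (Hp.sort b) ∧ walkMap Hp w a = some b := by
  induction h with
  | rel a b hab =>
    obtain ⟨e, he⟩ := hab
    obtain ⟨h1, h2⟩ := Hp.pmap_sort e a b he
    exact ⟨[e], ⟨h1.symm, h2.symm⟩, by simp [walkMap, he]⟩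
  | refl a => exact ⟨[], rfl, rfl⟩
  | symm a b _ ih =>
    obtain ⟨w, hw, hm⟩ := ih
    exact ⟨(w.reverse).map I.einv, isWalk_rev w _ _ hw, walkMap_rev Hp w a b hm⟩
  | trans a b c _ _ ih1 ih2 =>
    obtain ⟨w1, hw1, hm1⟩ := ih1
    obtain ⟨w2, hw2, hm2⟩ := ih2
    exact ⟨w1 ++ w2, isWalk_append w1 w2 _ _ _ hw1 hw2,
      by rw [walkMap_append Hp, hm1, Option.bind_some]; exact hm2⟩

/-- If an amalgamation pattern H over I is coherent, then the equivalence
relation ≈ induced by the links is trivial in restriction to each site A_s: no two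
distinct elements of the same site are ≈-equivalent. -/
theorem stmt5 {σ : Type} {ar : σ → ℕ} {I : IncidencePattern} (Hp : AmalgPattern σ ar I)
    (hcoh : Coherent Hp) :
    ∀ a b : Hp.H, Hp.sort a = Hp.sort b → Approx Hp a b → a = b := by
  intro a b hs hab
  obtain ⟨w, hw, hm⟩ := approx_walk Hp hab
  rw [← hs] at hw
  exact (hcoh (Hp.sort a) (Hp.sort a) [] w rfl hw a a b rfl rfl hm)
end

section
/- A groupoid G over an incidence pattern I is 2-acyclic if and only if for all inverse-closed generator subsets α₀, α₁ ⊆ E, the intersection of the generated subgroupoids satisfies G[α₀] ∩ G[α₁] = G[α₀ ∩ α₁]. -/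
/-- A groupoid over an incidence pattern `I` (Definition 3.8), presented algebraically:
elements with source/target sites, composition `mul` (meaningful on composable pairs),
units, inverses, and designated generators `gen e` for the links of `I`. -/
structure GroupoidOver (I : IncidencePattern) where
  G : Type
  gsrc : G → I.S
  gtgt : G → I.S
  mul : G → G → G
  one : I.S → G
  ginv : G → G
  gen : I.E → G
  gsrc_mul : ∀ g h, gtgt g = gsrc h → gsrc (mul g h) = gsrc g
  gtgt_mul : ∀ g h, gtgt g = gsrc h → gtgt (mul g h) = gtgt h
  mul_assoc : ∀ g h k, gtgt g = gsrc h → gtgt h = gsrc k →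
      mul (mul g h) k = mul g (mul h k)
  gsrc_one : ∀ s, gsrc (one s) = s
  gtgt_one : ∀ s, gtgt (one s) = s
  one_mul : ∀ g, mul (one (gsrc g)) g = g
  mul_one : ∀ g, mul g (one (gtgt g)) = g
  gsrc_ginv : ∀ g, gsrc (ginv g) = gtgt g
  gtgt_ginv : ∀ g, gtgt (ginv g) = gsrc g
  mul_ginv : ∀ g, mul g (ginv g) = one (gsrc g)
  ginv_mul : ∀ g, mul (ginv g) g = one (gtgt g)
  gsrc_gen : ∀ e, gsrc (gen e) = I.src e
  gtgt_gen : ∀ e, gtgt (gen e) = I.tgt e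
  gen_einv : ∀ e, gen (I.einv e) = ginv (gen e)

/-- The product w^G of the generators along a walk `w` starting at site `s`. -/
def wprod {I : IncidencePattern} (Γ : GroupoidOver I) : I.S → List I.E → Γ.G
  | s, [] => Γ.one s
  | _, e :: w => Γ.mul (Γ.gen e) (wprod Γ (I.tgt e) w)

/-- The groupoid is generated by the links of `I` (Definition 3.8(iii)). -/
def IsGenerated {I : IncidencePattern} (Γ : GroupoidOver I) : Prop :=
  ∀ g, ∃ w : List I.E, IsWalk I w (Γ.gsrc g) (Γ.gtgt g) ∧ g = wprod Γ (Γ.gsrc g) w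

/-- A set of links closed under edge reversal (inversion of generators). -/
def InvClosed (I : IncidencePattern) (α : Set I.E) : Prop := ∀ e ∈ α, I.einv e ∈ α

/-- `genSet Γ α` = G[α] : the subgroupoid generated by the generators in α,
including the units as empty products (Definition 3.13). -/
def genSet {I : IncidencePattern} (Γ : GroupoidOver I) (α : Set I.E) : Set Γ.G :=
  { g | ∃ w : List I.E, (∀ e ∈ w, e ∈ α) ∧ IsWalk I w (Γ.gsrc g) (Γ.gtgt g) ∧
        g = wprod Γ (Γ.gsrc g) w }

/-- The left coset g·G[α] (Definition 3.13). -/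
def coset {I : IncidencePattern} (Γ : GroupoidOver I) (g : Γ.G) (α : Set I.E) : Set Γ.G :=
  { k | ∃ h ∈ genSet Γ α, Γ.gsrc h = Γ.gtgt g ∧ k = Γ.mul g h }

/-- A coset cycle of length `n` (Definition 3.14). -/
def IsCosetCycle {I : IncidencePattern} (Γ : GroupoidOver I) (n : ℕ)
    (g : ZMod n → Γ.G) (α : ZMod n → Set I.E) : Prop :=
  (∀ i, InvClosed I (α i)) ∧
  (∀ i, g (i + 1) ∈ coset Γ (g i) (α i)) ∧
  (∀ i, coset Γ (g i) (α i ∩ α (i - 1)) ∩ coset Γ (g (i + 1)) (α i ∩ α (i + 1)) = ∅)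

/-- N-acyclicity of a groupoid (Definition 3.15): no coset cycles of length 2 ≤ n ≤ N. -/
def NAcyclicG {I : IncidencePattern} (Γ : GroupoidOver I) (N : ℕ) : Prop :=
  ∀ n, 2 ≤ n → n ≤ N → ∀ (g : ZMod n → Γ.G) (α : ZMod n → Set I.E),
    ¬ IsCosetCycle Γ n g α

/-- Simplicity of a groupoid over `I` (Definition 3.9): the generators are pairwise
distinct and none of them is a unit. -/
def SimpleGroupoid {I : IncidencePattern} (Γ : GroupoidOver I) : Prop :=
  Function.Injective Γ.gen ∧ ∀ (e : I.E) (s : I.S), Γ.gen e ≠ Γ.one s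

/-! A coset cycle of length 2 is a pair of cosets `g₀ G[α₀] ∋ g₁` and `g₁ G[α₁] ∋ g₀`. Writing
`g₁ = g₀ h`, the element `h` lies in `G[α₀]`, and `h⁻¹` lies in `G[α₁]`, so `h ∈ G[α₀] ∩ G[α₁]`;
the disjointness condition at index 0 then says exactly that `h ∉ G[α₀ ∩ α₁]`. Conversely, any
`h ∈ (G[α₀] ∩ G[α₁]) \ G[α₀ ∩ α₁]` yields the 2-cycle `(1, h)` with generator sets `(α₀, α₁)`. -/

namespace GroupoidOver

variable {I : IncidencePattern} (Γ : GroupoidOver I)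

theorem eq_ginv_of_mul_eq_one {a b : Γ.G} (hab : Γ.gtgt a = Γ.gsrc b)
    (h : Γ.mul a b = Γ.one (Γ.gsrc a)) : b = Γ.ginv a :=
  calc b = Γ.mul (Γ.one (Γ.gsrc b)) b := (Γ.one_mul b).symm
    _ = Γ.mul (Γ.mul (Γ.ginv a) a) b := by rw [← hab, ← Γ.ginv_mul a]
    _ = Γ.mul (Γ.ginv a) (Γ.mul a b) := Γ.mul_assoc _ _ _ (Γ.gtgt_ginv a) hab
    _ = Γ.ginv a := by rw [h, ← Γ.gtgt_ginv a, Γ.mul_one]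

theorem ginv_ginv (g : Γ.G) : Γ.ginv (Γ.ginv g) = g :=
  (Γ.eq_ginv_of_mul_eq_one (Γ.gtgt_ginv g) (by rw [Γ.ginv_mul, Γ.gsrc_ginv])).symm

theorem ginv_one (s : I.S) : Γ.ginv (Γ.one s) = Γ.one s := by
  have h := Γ.one_mul (Γ.one s)
  rw [Γ.gsrc_one] at h
  exact (Γ.eq_ginv_of_mul_eq_one (by rw [Γ.gsrc_one, Γ.gtgt_one]) (by rw [h, Γ.gsrc_one])).symm

theorem ginv_mul_rev {g h : Γ.G} (hgh : Γ.gtgt g = Γ.gsrc h) :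
    Γ.ginv (Γ.mul g h) = Γ.mul (Γ.ginv h) (Γ.ginv g) := by
  have hinv : Γ.gtgt (Γ.ginv h) = Γ.gsrc (Γ.ginv g) := by
    rw [Γ.gtgt_ginv, Γ.gsrc_ginv, hgh]
  have hcancel : Γ.mul h (Γ.mul (Γ.ginv h) (Γ.ginv g)) = Γ.ginv g := by
    rw [← Γ.mul_assoc _ _ _ (Γ.gsrc_ginv h).symm hinv, Γ.mul_ginv, ← hgh, ← Γ.gsrc_ginv g,
      Γ.one_mul]
  have hh : Γ.gtgt h = Γ.gsrc (Γ.mul (Γ.ginv h) (Γ.ginv g)) := by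
    rw [Γ.gsrc_mul _ _ hinv, Γ.gsrc_ginv]
  refine (Γ.eq_ginv_of_mul_eq_one ?_ ?_).symm
  · rw [Γ.gsrc_mul _ _ hinv, Γ.gsrc_ginv, Γ.gtgt_mul _ _ hgh]
  · rw [Γ.mul_assoc _ _ _ hgh hh, hcancel, Γ.mul_ginv, Γ.gsrc_mul _ _ hgh]

theorem ginv_eq_of_mul_mul_eq {g a b : Γ.G} (hga : Γ.gtgt g = Γ.gsrc a)
    (hab : Γ.gtgt a = Γ.gsrc b) (h : Γ.mul (Γ.mul g a) b = g) : Γ.ginv a = b := by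
  have hab' : Γ.mul a b = Γ.one (Γ.gsrc a) :=
    calc Γ.mul a b = Γ.mul (Γ.mul (Γ.ginv g) g) (Γ.mul a b) := by
          rw [Γ.ginv_mul, hga, ← Γ.gsrc_mul _ _ hab, Γ.one_mul]
      _ = Γ.mul (Γ.ginv g) (Γ.mul (Γ.mul g a) b) := by
          rw [Γ.mul_assoc _ _ _ (Γ.gtgt_ginv g) (by rw [Γ.gsrc_mul _ _ hab, hga]),
            Γ.mul_assoc _ _ _ hga hab]
      _ = Γ.one (Γ.gsrc a) := by rw [h, Γ.ginv_mul, hga]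
  exact (Γ.eq_ginv_of_mul_eq_one hab hab').symm

end GroupoidOver

theorem IncidencePattern.tgt_einv (I : IncidencePattern) (e : I.E) : I.tgt (I.einv e) = I.src e := by
  rw [← I.src_einv, I.einv_einv]

namespace IsWalk

variable {I : IncidencePattern}

theorem append {w₁ w₂ : List I.E} {s t u : I.S} (h₁ : IsWalk I w₁ s t) (h₂ : IsWalk I w₂ t u) :
    IsWalk I (w₁ ++ w₂) s u := by
  induction w₁ generalizing s with
  | nil => exact (show s = t from h₁) ▸ h₂
  | cons e w₁ ih => exact ⟨h₁.1, ih h₁.2⟩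

theorem reverse_map_einv {w : List I.E} {s t : I.S} (h : IsWalk I w s t) :
    IsWalk I (w.map I.einv).reverse t s := by
  induction w generalizing s with
  | nil => exact (show s = t from h).symm
  | cons e w ih =>
    rw [List.map_cons, List.reverse_cons]
    exact ih h.2 |>.append ⟨I.src_einv e, (I.tgt_einv e).trans h.1⟩

end IsWalk

section Walks

variable {I : IncidencePattern} (Γ : GroupoidOver I)

theorem gsrc_wprod_gtgt_wprod {w : List I.E} {s t : I.S} (h : IsWalk I w s t) :
    Γ.gsrc (wprod Γ s w) = s ∧ Γ.gtgt (wprod Γ s w) = t := by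
  induction w generalizing s with
  | nil => exact ⟨Γ.gsrc_one s, (show s = t from h) ▸ Γ.gtgt_one s⟩
  | cons e w ih =>
    obtain ⟨hsrc, htgt⟩ := ih h.2
    have hc : Γ.gtgt (Γ.gen e) = Γ.gsrc (wprod Γ (I.tgt e) w) := by rw [Γ.gtgt_gen, hsrc]
    exact ⟨by rw [wprod, Γ.gsrc_mul _ _ hc, Γ.gsrc_gen, h.1], by rw [wprod, Γ.gtgt_mul _ _ hc, htgt]⟩

theorem wprod_append {w₁ w₂ : List I.E} {s t u : I.S} (h₁ : IsWalk I w₁ s t)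
    (h₂ : IsWalk I w₂ t u) :
    wprod Γ s (w₁ ++ w₂) = Γ.mul (wprod Γ s w₁) (wprod Γ t w₂) := by
  induction w₁ generalizing s with
  | nil =>
    obtain rfl : s = t := h₁
    have h := Γ.one_mul (wprod Γ s w₂)
    rw [(gsrc_wprod_gtgt_wprod Γ h₂).1] at h
    exact h.symm
  | cons e w₁ ih =>
    have hw₁ := gsrc_wprod_gtgt_wprod Γ h₁.2
    have hw₂ := gsrc_wprod_gtgt_wprod Γ h₂
    rw [List.cons_append, wprod, ih h₁.2, wprod,
      Γ.mul_assoc _ _ _ (by rw [Γ.gtgt_gen, hw₁.1]) (by rw [hw₁.2, hw₂.1])]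

theorem wprod_reverse_map_einv {w : List I.E} {s t : I.S} (h : IsWalk I w s t) :
    wprod Γ t (w.map I.einv).reverse = Γ.ginv (wprod Γ s w) := by
  induction w generalizing s with
  | nil =>
    obtain rfl : s = t := h
    exact (Γ.ginv_one s).symm
  | cons e w ih =>
    have hlast : IsWalk I [I.einv e] (I.tgt e) s := ⟨I.src_einv e, (I.tgt_einv e).trans h.1⟩
    have hgen : wprod Γ (I.tgt e) [I.einv e] = Γ.ginv (Γ.gen e) := by
      rw [wprod, wprod, ← Γ.gtgt_gen (I.einv e), Γ.mul_one, Γ.gen_einv]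
    have hc : Γ.gtgt (Γ.gen e) = Γ.gsrc (wprod Γ (I.tgt e) w) := by
      rw [Γ.gtgt_gen, (gsrc_wprod_gtgt_wprod Γ h.2).1]
    rw [List.map_cons, List.reverse_cons, wprod_append Γ (IsWalk.reverse_map_einv h.2) hlast,
      ih h.2, hgen, wprod, Γ.ginv_mul_rev hc]

end Walks

section GenSet

variable {I : IncidencePattern} (Γ : GroupoidOver I)

theorem genSet_mono {α β : Set I.E} (hαβ : α ⊆ β) : genSet Γ α ⊆ genSet Γ β :=
  fun _ ⟨w, hwα, hw, hg⟩ => ⟨w, fun e he => hαβ (hwα e he), hw, hg⟩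

theorem one_mem_genSet (s : I.S) (α : Set I.E) : Γ.one s ∈ genSet Γ α :=
  ⟨[], by simp, by rw [Γ.gsrc_one, Γ.gtgt_one]; rfl, by rw [Γ.gsrc_one]; rfl⟩

theorem mul_mem_genSet {α : Set I.E} {g h : Γ.G} (hg : g ∈ genSet Γ α) (hh : h ∈ genSet Γ α)
    (hgh : Γ.gtgt g = Γ.gsrc h) : Γ.mul g h ∈ genSet Γ α := by
  obtain ⟨w₁, hw₁α, hw₁, hg⟩ := hg
  obtain ⟨w₂, hw₂α, hw₂, hh⟩ := hh
  rw [← hgh] at hw₂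
  refine ⟨w₁ ++ w₂, fun e he => (List.mem_append.mp he).elim (hw₁α e) (hw₂α e), ?_, ?_⟩
  · rw [Γ.gsrc_mul _ _ hgh, Γ.gtgt_mul _ _ hgh]
    exact hw₁.append hw₂
  · rw [Γ.gsrc_mul _ _ hgh, wprod_append Γ hw₁ hw₂, ← hg, hgh, ← hh]

theorem ginv_mem_genSet {α : Set I.E} (hα : InvClosed I α) {g : Γ.G} (hg : g ∈ genSet Γ α) :
    Γ.ginv g ∈ genSet Γ α := by
  obtain ⟨w, hwα, hw, hg⟩ := hg
  refine ⟨(w.map I.einv).reverse, ?_, ?_, ?_⟩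
  · intro e he
    obtain ⟨e', he', rfl⟩ := List.mem_map.mp (List.mem_reverse.mp he)
    exact hα e' (hwα e' he')
  · rw [Γ.gsrc_ginv, Γ.gtgt_ginv]
    exact hw.reverse_map_einv
  · rw [Γ.gsrc_ginv, wprod_reverse_map_einv Γ hw, ← hg]

theorem self_mem_coset (g : Γ.G) (α : Set I.E) : g ∈ coset Γ g α :=
  ⟨Γ.one (Γ.gtgt g), one_mem_genSet Γ _ _, Γ.gsrc_one _, (Γ.mul_one g).symm⟩

theorem mem_coset_one {α : Set I.E} {g : Γ.G} (hg : g ∈ genSet Γ α) :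
    g ∈ coset Γ (Γ.one (Γ.gsrc g)) α :=
  ⟨g, hg, (Γ.gtgt_one _).symm, (Γ.one_mul g).symm⟩

theorem coset_one_subset_genSet (s : I.S) (α : Set I.E) :
    coset Γ (Γ.one s) α ⊆ genSet Γ α := by
  rintro _ ⟨h, hh, hsrc, rfl⟩
  rw [Γ.gtgt_one] at hsrc
  rwa [← hsrc, Γ.one_mul]

theorem mem_genSet_of_mem_coset {α : Set I.E} (hα : InvClosed I α) {g k : Γ.G}
    (hk : k ∈ genSet Γ α) (hkg : k ∈ coset Γ g α) : g ∈ genSet Γ α := by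
  obtain ⟨h, hh, hsrc, rfl⟩ := hkg
  have hg : Γ.mul (Γ.mul g h) (Γ.ginv h) = g := by
    rw [Γ.mul_assoc _ _ _ hsrc.symm (Γ.gsrc_ginv h).symm, Γ.mul_ginv, hsrc, Γ.mul_one]
  rw [← hg]
  exact mul_mem_genSet Γ hk (ginv_mem_genSet Γ hα hh)
    (by rw [Γ.gsrc_ginv, Γ.gtgt_mul _ _ hsrc.symm])

end GenSet

section TwoCycles

variable {I : IncidencePattern} (Γ : GroupoidOver I)

theorem exists_mem_inter_not_mem_genSet_inter_of_isCosetCycle {g : ZMod 2 → Γ.G}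
    {α : ZMod 2 → Set I.E} (hcyc : IsCosetCycle Γ 2 g α) :
    ∃ h ∈ genSet Γ (α 0) ∩ genSet Γ (α 1), h ∉ genSet Γ (α 0 ∩ α 1) := by
  obtain ⟨hinv, hmem, hdisj⟩ := hcyc
  obtain ⟨h₀, h₀_mem, h₀_src, hg₁⟩ := hmem 0
  obtain ⟨h₁, h₁_mem, h₁_src, hg₀⟩ := hmem 1
  change g 1 = _ at hg₁
  change g 0 = _ at hg₀
  have hh₀h₁ : Γ.gtgt h₀ = Γ.gsrc h₁ := by
    rw [h₁_src, hg₁, Γ.gtgt_mul _ _ h₀_src.symm]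
  have hinv₀ : Γ.ginv h₀ = h₁ :=
    Γ.ginv_eq_of_mul_mul_eq h₀_src.symm hh₀h₁ (by rw [← hg₁]; exact hg₀.symm)
  refine ⟨h₀, ⟨h₀_mem, ?_⟩, fun h₀_mem' => ?_⟩
  · rw [← Γ.ginv_ginv h₀, hinv₀]
    exact ginv_mem_genSet Γ (hinv 1) h₁_mem
  · have hd := hdisj 0
    rw [show (0 : ZMod 2) - 1 = 1 from rfl, show (0 : ZMod 2) + 1 = 1 from rfl] at hd
    exact (Set.eq_empty_iff_forall_notMem.mp hd) (g 1)
      ⟨⟨h₀, h₀_mem', h₀_src, hg₁⟩, self_mem_coset Γ _ _⟩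

theorem isCosetCycle_two_of_mem_inter_not_mem_genSet_inter {α₀ α₁ : Set I.E}
    (hα₀ : InvClosed I α₀) (hα₁ : InvClosed I α₁) {h : Γ.G}
    (hmem : h ∈ genSet Γ α₀ ∩ genSet Γ α₁) (hnot : h ∉ genSet Γ (α₀ ∩ α₁)) :
    IsCosetCycle Γ 2 ![Γ.one (Γ.gsrc h), h] ![α₀, α₁] := by
  have hβ : InvClosed I (α₀ ∩ α₁) := fun e he => ⟨hα₀ e he.1, hα₁ e he.2⟩
  have hdisj : coset Γ (Γ.one (Γ.gsrc h)) (α₀ ∩ α₁) ∩ coset Γ h (α₀ ∩ α₁) = ∅ :=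
    Set.eq_empty_iff_forall_notMem.mpr fun k ⟨hk₁, hk₂⟩ =>
      hnot (mem_genSet_of_mem_coset Γ hβ (coset_one_subset_genSet Γ _ _ hk₁) hk₂)
  refine ⟨fun i => ?_, fun i => ?_, fun i => ?_⟩ <;> fin_cases i
  · exact hα₀
  · exact hα₁
  · exact mem_coset_one Γ hmem.1
  · exact ⟨Γ.ginv h, ginv_mem_genSet Γ hα₁ hmem.2, Γ.gsrc_ginv h, (Γ.mul_ginv h).symm⟩
  · exact hdisj
  · show coset Γ h (α₁ ∩ α₀) ∩ coset Γ (Γ.one (Γ.gsrc h)) (α₁ ∩ α₀) = ∅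
    rw [Set.inter_comm, Set.inter_comm α₁]
    exact hdisj

end TwoCycles

theorem stmt8_general {I : IncidencePattern} (Γ : GroupoidOver I) :
    NAcyclicG Γ 2 ↔
      ∀ α₀ α₁ : Set I.E, InvClosed I α₀ → InvClosed I α₁ →
        genSet Γ α₀ ∩ genSet Γ α₁ = genSet Γ (α₀ ∩ α₁) := by
  constructor
  · intro hacyc α₀ α₁ hα₀ hα₁
    refine subset_antisymm (fun h hmem => ?_)
      (Set.subset_inter (genSet_mono Γ Set.inter_subset_left)
        (genSet_mono Γ Set.inter_subset_right))
    by_contra hnot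
    exact hacyc 2 le_rfl le_rfl _ _
      (isCosetCycle_two_of_mem_inter_not_mem_genSet_inter Γ hα₀ hα₁ hmem hnot)
  · rintro hinter n hn₂ hn₂' g α hcyc
    obtain rfl : n = 2 := by omega
    obtain ⟨h, hmem, hnot⟩ := exists_mem_inter_not_mem_genSet_inter_of_isCosetCycle Γ hcyc
    exact hnot (hinter _ _ (hcyc.1 0) (hcyc.1 1) ▸ hmem)

/-- Observation 3.16: A groupoid G over an incidence pattern I is
2-acyclic if and only if for all inverse-closed generator subsets α₀, α₁ ⊆ E,
G[α₀] ∩ G[α₁] = G[α₀ ∩ α₁]. -/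
theorem stmt8 {I : IncidencePattern} (Γ : GroupoidOver I) (hgen : IsGenerated Γ) :
    NAcyclicG Γ 2 ↔
      ∀ α₀ α₁ : Set I.E, InvClosed I α₀ → InvClosed I α₁ →
        genSet Γ α₀ ∩ genSet Γ α₁ = genSet Γ (α₀ ∩ α₁) :=
  stmt8_general Γ
end

section
/- A hypergraph is N-acyclic (every induced sub-hypergraph on at most N vertices is acyclic) if and only if it is both N-chordal (no chordless Gaifman cycles of length greater than 3 and at most N) and N-conformal (every Gaifman clique of size at most N lies in a hyperedge). -/
/-- Gaifman adjacency for a hypergraph with hyperedge set `U`: two distinct vertices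
are adjacent iff they lie in a common hyperedge. -/
def HAdj {V : Type} (U : Set (Finset V)) (a b : V) : Prop :=
  a ≠ b ∧ ∃ u ∈ U, a ∈ u ∧ b ∈ u

/-- Chordality: the Gaifman graph has no chordless cycles of length greater than 3,
i.e. every injective cycle of length > 3 has a chord. -/
def HChordal {V : Type} (U : Set (Finset V)) : Prop :=
  ∀ (n : ℕ), 3 < n → ∀ c : ZMod n → V, Function.Injective c →
    (∀ i, HAdj U (c i) (c (i + 1))) →
    ∃ i j : ZMod n, j ≠ i ∧ j ≠ i + 1 ∧ j ≠ i - 1 ∧ HAdj U (c i) (c j)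

/-- Conformality relative to a vertex set `W`: every (nonempty) clique of the Gaifman
graph with vertices in `W` is contained in some hyperedge. -/
def HConformalOn {V : Type} (W : Set V) (U : Set (Finset V)) : Prop :=
  ∀ C : Finset V, C.Nonempty → ↑C ⊆ W →
    (∀ a ∈ C, ∀ b ∈ C, a ≠ b → HAdj U a b) → ∃ u ∈ U, C ⊆ u

/-- N-chordality: no chordless Gaifman cycles of length greater than 3 and at most N. -/
def HNChordal {V : Type} (U : Set (Finset V)) (N : ℕ) : Prop :=
  ∀ (n : ℕ), 3 < n → n ≤ N → ∀ c : ZMod n → V, Function.Injective c →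
    (∀ i, HAdj U (c i) (c (i + 1))) →
    ∃ i j : ZMod n, j ≠ i ∧ j ≠ i + 1 ∧ j ≠ i - 1 ∧ HAdj U (c i) (c j)

/-- N-conformality: every (nonempty) Gaifman clique of size at most N lies in a hyperedge. -/
def HNConformal {V : Type} (U : Set (Finset V)) (N : ℕ) : Prop :=
  ∀ C : Finset V, C.Nonempty → C.card ≤ N →
    (∀ a ∈ C, ∀ b ∈ C, a ≠ b → HAdj U a b) → ∃ u ∈ U, C ⊆ u

/-- The hyperedges of the induced sub-hypergraph on the vertex set `B`:
{u ∩ B : u ∈ U, u ∩ B ≠ ∅}. -/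
def inducedEdges {V : Type} [DecidableEq V] (U : Set (Finset V)) (B : Finset V) :
    Set (Finset V) :=
  {w | ∃ u ∈ U, w = u ∩ B ∧ (u ∩ B).Nonempty}

/-- The induced sub-hypergraph on `B` is acyclic: chordal and conformal. -/
def HAcyclicOn {V : Type} [DecidableEq V] (U : Set (Finset V)) (B : Finset V) : Prop :=
  HChordal (inducedEdges U B) ∧ HConformalOn (↑B) (inducedEdges U B)

/-- N-acyclicity of a hypergraph: every induced sub-hypergraph on at most N vertices
is acyclic. -/
def HNAcyclic {V : Type} [DecidableEq V] (U : Set (Finset V)) (N : ℕ) : Prop :=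
  ∀ B : Finset V, B.card ≤ N → HAcyclicOn U B

lemma adj_ind {V : Type} [DecidableEq V] (U : Set (Finset V)) (B : Finset V) (a b : V) :
    HAdj (inducedEdges U B) a b ↔ a ∈ B ∧ b ∈ B ∧ HAdj U a b := by
  constructor
  · rintro ⟨hne, w, ⟨u, hu, rfl, -⟩, ha, hb⟩
    simp only [Finset.mem_inter] at ha hb
    exact ⟨ha.2, hb.2, hne, u, hu, ha.1, hb.1⟩
  · rintro ⟨haB, hbB, hne, u, hu, ha, hb⟩
    exact ⟨hne, u ∩ B, ⟨u, hu, rfl, ⟨a, Finset.mem_inter.2 ⟨ha, haB⟩⟩⟩,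
      Finset.mem_inter.2 ⟨ha, haB⟩, Finset.mem_inter.2 ⟨hb, hbB⟩⟩

/-- A hypergraph is N-acyclic (every induced sub-hypergraph on at most N
vertices is acyclic) iff it is both N-chordal (no chordless Gaifman cycles of length
greater than 3 and at most N) and N-conformal (every Gaifman clique of size at most N
lies in a hyperedge). -/
theorem stmt18 {V : Type} [DecidableEq V] (U : Set (Finset V))
    (hcov : ∀ v : V, ∃ u ∈ U, v ∈ u) (N : ℕ) (hN : 3 ≤ N) :
    HNAcyclic U N ↔ (HNChordal U N ∧ HNConformal U N) := by
  constructor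
  · intro h
    constructor
    · intro n h3 hn c hc hadj
      haveI : NeZero n := ⟨by omega⟩
      set B := Finset.image c Finset.univ with hB
      have hcard : B.card ≤ N := le_trans (Finset.card_image_le.trans (by simp [ZMod.card])) hn
      have hch := (h B hcard).1
      have hmem : ∀ i, c i ∈ B := fun i => Finset.mem_image_of_mem c (Finset.mem_univ i)
      obtain ⟨i, j, h1, h2, h3', hadj'⟩ := hch n h3 c hc (fun i =>
        (adj_ind U B _ _).2 ⟨hmem i, hmem _, hadj i⟩)
      exact ⟨i, j, h1, h2, h3', ((adj_ind U B _ _).1 hadj').2.2⟩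
    · intro C hCne hCcard hclq
      have hcf := (h C hCcard).2
      obtain ⟨w, ⟨u, hu, rfl, -⟩, hsub⟩ := hcf C hCne (subset_refl _) (fun a ha b hb hne =>
        (adj_ind U C a b).2 ⟨ha, hb, hclq a ha b hb hne⟩)
      exact ⟨u, hu, hsub.trans Finset.inter_subset_left⟩
  · rintro ⟨hch, hcf⟩ B hB
    constructor
    · intro n h3 c hc hadj
      haveI : NeZero n := ⟨by omega⟩
      have hmem : ∀ i, c i ∈ B := fun i => ((adj_ind U B _ _).1 (hadj i)).1
      have hn : n ≤ N := by
        have h1 : (Finset.univ : Finset (ZMod n)).card ≤ B.card :=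
          Finset.card_le_card_of_injOn c (fun i _ => hmem i) (fun x _ y _ h => hc h)
        simp only [Finset.card_univ, ZMod.card] at h1
        exact h1.trans hB
      obtain ⟨i, j, h1, h2, h3', hadj'⟩ := hch n h3 hn c hc
        (fun i => ((adj_ind U B _ _).1 (hadj i)).2.2)
      exact ⟨i, j, h1, h2, h3', (adj_ind U B _ _).2 ⟨hmem i, hmem j, hadj'⟩⟩
    · intro C hCne hCsub hclq
      have hsubB : ∀ x ∈ C, x ∈ B := fun x hx => by exact_mod_cast hCsub hx
      have hcard : C.card ≤ N := le_trans (Finset.card_le_card hsubB) hB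
      obtain ⟨u, hu, hsub⟩ := hcf C hCne hcard (fun a ha b hb hne =>
        ((adj_ind U B a b).1 (hclq a ha b hb hne)).2.2)
      obtain ⟨x, hx⟩ := hCne
      exact ⟨u ∩ B, ⟨u, hu, rfl, ⟨x, Finset.mem_inter.2 ⟨hsub hx, hsubB x hx⟩⟩⟩,
        fun y hy => Finset.mem_inter.2 ⟨hsub hy, hsubB y hy⟩⟩
end
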